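/- Let Ω and Δ be locally compact Hausdorff spaces and θ : C₀(Ω) → C₀(Δ) a bijective ℂ-linear map (not assumed bounded) such that both θ and θ⁻¹ are disjointness preserving (f·g = 0 implies θ(f)·θ(g) = 0, and similarly for θ⁻¹). Then there exist a homeomorphism σ : Δ → Ω and a nowhere-vanishing continuous function h : Δ → ℂ such that θ(f)(ν) = h(ν)·f(σ(ν)) for all f ∈ C₀(Ω) and ν ∈ Δ. -/

import Mathlib

/-!
For `y ∈ Δ` the functional `f ↦ θ f y` preserves zero products, so it has exactly one support
point `σ y` in the one-point compactification of `Ω`. A partition of unity shows that it kills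
every function vanishing near `σ y`, and every function vanishing at `σ y` if it is continuous.
The same applies to `θ⁻¹`, and the two support maps are continuous and mutually inverse. A
gliding hump shows that only finitely many of these functionals are discontinuous and that
`σ y ≠ ∞`. At points of continuity `θ f y = θ u y * f (σ y)` whenever `u = 1` near `σ y`; at the
remaining points `θ f y` is a limit of such values, or the point is isolated.
-/

open ZeroAtInfty
open Set Filter Topology OnePoint Function

def PreservesZeroProducts {A B : Type*} [Mul A] [Zero A] [Mul B] [Zero B] (T : A → B) : Prop :=
  ∀ a b, a * b = 0 → T a * T b = 0

theorem exists_continuous_eventuallyEq_one_of_mem_nhds {Z : Type*} [TopologicalSpace Z]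
    [LocallyCompactSpace Z] [T2Space Z] {z : Z} {U : Set Z} (hU : U ∈ 𝓝 z) :
    ∃ p : C(Z, ℝ), tsupport p ⊆ U ∧ p =ᶠ[𝓝 z] 1 ∧ ∀ w, p w ∈ Icc (0 : ℝ) 1 := by
  obtain ⟨K, hK, hzK, hKU⟩ :=
    exists_compact_subset isOpen_interior (mem_interior_iff_mem_nhds.2 hU)
  obtain ⟨p, hp1, -, hpU, hp01⟩ :=
    exists_continuousMap_one_of_isCompact_subset_isOpen hK isOpen_interior hKU
  exact ⟨p, hpU.trans interior_subset,
    eventually_of_mem (mem_interior_iff_mem_nhds.1 hzK) hp1, hp01⟩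

theorem exists_norm_le_one_lt_norm_of_not_continuous {𝕜 E : Type*} [RCLike 𝕜]
    [NormedAddCommGroup E] [NormedSpace 𝕜 E] (φ : E →ₗ[𝕜] 𝕜) (hφ : ¬Continuous φ) (M : ℝ) :
    ∃ f, ‖f‖ ≤ 1 ∧ M < ‖φ f‖ := by
  by_contra! h
  exact hφ <| AddMonoidHomClass.continuous_of_bound φ (M / 1) <|
    φ.bound_of_ball_bound' one_pos M fun f hf => h f (mem_closedBall_zero_iff.1 hf)

theorem exists_pairwise_disjoint_nhds_of_frequently {Z : Type*} [TopologicalSpace Z] [T3Space Z]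
    {z : Z} {Q : ℕ → Z → Prop} (hQ : ∀ n, ∃ᶠ x in 𝓝[≠] z, Q n x) :
    ∃ (x : ℕ → Z) (U : ℕ → Set Z),
      (∀ n, U n ∈ 𝓝 (x n)) ∧ (∀ n, Q n (x n)) ∧ Pairwise (Disjoint on U) := by
  have step : ∀ n, ∀ W ∈ 𝓝 z, ∃ x, ∃ t ∈ 𝓝 x, Q n x ∧ t ⊆ W ∧ W \ t ∈ 𝓝 z := by
    intro n W hW
    obtain ⟨x, hQx, hxW, hxz⟩ := ((hQ n).and_eventually
      (inter_mem (nhdsWithin_le_nhds (interior_mem_nhds.2 hW)) self_mem_nhdsWithin)).exists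
    obtain ⟨t, ht, htc, htW⟩ := exists_mem_nhds_isClosed_subset
      ((isOpen_interior.inter isOpen_compl_singleton).mem_nhds ⟨hxW, hxz⟩)
    exact ⟨x, t, ht, hQx, htW.trans (inter_subset_left.trans interior_subset),
      sdiff_mem hW (htc.compl_mem_nhds fun hz => (htW hz).2 rfl)⟩
  have : Nonempty Z := ⟨z⟩
  choose! x t ht hQx htW hWt using step
  let W : ℕ → Set Z := fun n => Nat.rec univ (fun n W => W \ t n W) n
  have hW : ∀ n, W n ∈ 𝓝 z := fun n => by
    induction n with
    | zero => exact univ_mem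
    | succ n ih => exact hWt n _ ih
  refine ⟨fun n => x n (W n), fun n => t n (W n), fun n => ht n _ (hW n),
    fun n => hQx n _ (hW n), (pairwise_disjoint_on _).2 fun m n hmn => ?_⟩
  have hWmn : W n ⊆ W (m + 1) := antitone_nat_of_succ_le (fun k => sdiff_subset) hmn
  exact disjoint_left.2 fun a ha hb => (hWmn (htW n _ (hW n) hb)).2 ha

noncomputable section

namespace ZeroAtInftyContinuousMap

section OnePoint

variable {X E : Type*} [TopologicalSpace X] [T2Space X] [TopologicalSpace E] [Zero E]

def toOnePoint (f : C₀(X, E)) : C(OnePoint X, E) :=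
  continuousMapMk f 0 (by rw [coclosedCompact_eq_cocompact]; exact zero_at_infty f)

@[simp] theorem toOnePoint_coe (f : C₀(X, E)) (x : X) : toOnePoint f x = f x := rfl

@[simp] theorem toOnePoint_infty (f : C₀(X, E)) : toOnePoint f ∞ = 0 := rfl

def ofOnePoint (p : C(OnePoint X, E)) (hp : p ∞ = 0) : C₀(X, E) where
  toFun x := p x
  continuous_toFun := p.continuous.comp continuous_coe
  zero_at_infty' := by
    rw [← coclosedCompact_eq_cocompact, ← hp]
    exact (p.continuous.tendsto ∞).comp tendsto_coe_infty

@[simp] theorem ofOnePoint_apply (p : C(OnePoint X, E)) (hp : p ∞ = 0) (x : X) :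
    ofOnePoint p hp x = p x := rfl

end OnePoint

variable {X Y : Type*} [TopologicalSpace X] [TopologicalSpace Y] {𝕜 : Type*} [RCLike 𝕜]

section Normed

variable {E : Type*} [NormedAddCommGroup E]

theorem norm_apply_le (f : C₀(X, E)) (x : X) : ‖f x‖ ≤ ‖f‖ := by
  rw [← norm_toBCF_eq_norm]
  exact f.toBCF.norm_coe_le_norm x

theorem norm_le {f : C₀(X, E)} {C : ℝ} (hC : 0 ≤ C) : ‖f‖ ≤ C ↔ ∀ x, ‖f x‖ ≤ C := by
  rw [← norm_toBCF_eq_norm]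
  exact BoundedContinuousFunction.norm_le hC

variable (𝕜) [NormedSpace 𝕜 E]

def evalCLM (x : X) : C₀(X, E) →L[𝕜] E :=
  LinearMap.mkContinuous ⟨⟨fun f => f x, fun _ _ => rfl⟩, fun _ _ => rfl⟩ 1
    fun f => by simpa using norm_apply_le f x

@[simp] theorem evalCLM_apply (x : X) (f : C₀(X, E)) : evalCLM 𝕜 x f = f x := rfl

end Normed

theorem mul_eq_zero_of_disjoint_support {β : Type*} [TopologicalSpace β] [MulZeroClass β]
    [ContinuousMul β] {f g : C₀(X, β)} (h : Disjoint (support f) (support g)) : f * g = 0 := by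
  ext x
  by_contra hx
  exact disjoint_left.1 h (left_ne_zero_of_mul hx) (right_ne_zero_of_mul hx)

def evalComp (T : C₀(X, 𝕜) →ₗ[𝕜] C₀(Y, 𝕜)) (y : Y) : C₀(X, 𝕜) →ₗ[𝕜] 𝕜 :=
  (evalCLM 𝕜 y).toLinearMap ∘ₗ T

@[simp] theorem evalComp_apply (T : C₀(X, 𝕜) →ₗ[𝕜] C₀(Y, 𝕜)) (y : Y) (f : C₀(X, 𝕜)) :
    evalComp T y f = T f y := rfl

theorem _root_.PreservesZeroProducts.evalComp {T : C₀(X, 𝕜) →ₗ[𝕜] C₀(Y, 𝕜)}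
    (hT : PreservesZeroProducts T) (y : Y) : PreservesZeroProducts (evalComp T y) :=
  fun f g hfg => by simpa using congr($(hT f g hfg) y)

section

variable [T2Space X]

def cutoffMul (p : C(OnePoint X, ℝ)) (f : C₀(X, 𝕜)) : C₀(X, 𝕜) :=
  ofOnePoint ⟨fun z => (p z : 𝕜) * toOnePoint f z, by fun_prop⟩ (by simp)

@[simp] theorem cutoffMul_apply (p : C(OnePoint X, ℝ)) (f : C₀(X, 𝕜)) (x : X) :
    cutoffMul p f x = p x * f x := rfl

theorem support_toOnePoint_cutoffMul_subset (p : C(OnePoint X, ℝ)) (f : C₀(X, 𝕜)) :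
    support (toOnePoint (cutoffMul p f)) ⊆ support p := by
  intro z hz
  induction z using OnePoint.rec with
  | infty => exact (hz rfl).elim
  | coe x => exact fun hp => hz (by simp [hp])

theorem norm_cutoffMul_apply_le {p : C(OnePoint X, ℝ)} (hp : ∀ z, p z ∈ Icc (0 : ℝ) 1)
    (f : C₀(X, 𝕜)) (x : X) : ‖cutoffMul p f x‖ ≤ ‖f x‖ := by
  rw [cutoffMul_apply, norm_mul, RCLike.norm_ofReal, abs_of_nonneg (hp x).1]
  exact mul_le_of_le_one_left (norm_nonneg _) (hp x).2

theorem toOnePoint_sub_cutoffMul_eventuallyEq {p : C(OnePoint X, ℝ)} {z : OnePoint X}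
    (hp : p =ᶠ[𝓝 z] 1) (f : C₀(X, 𝕜)) : toOnePoint (f - cutoffMul p f) =ᶠ[𝓝 z] 0 := by
  filter_upwards [hp] with w hw
  induction w using OnePoint.rec with
  | infty => rfl
  | coe x => simp [hw]

def IsSupportPoint (φ : C₀(X, 𝕜) →ₗ[𝕜] 𝕜) (z : OnePoint X) : Prop :=
  ∀ U ∈ 𝓝 z, ∃ f : C₀(X, 𝕜), support (toOnePoint f) ⊆ U ∧ φ f ≠ 0

variable [LocallyCompactSpace X]

theorem exists_eventuallyEq_one (x : X) {U : Set (OnePoint X)} (hU : U ∈ 𝓝 (x : OnePoint X)) :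
    ∃ g : C₀(X, 𝕜), tsupport (toOnePoint g) ⊆ U ∧ g =ᶠ[𝓝 x] 1 ∧ ‖g‖ ≤ 1 := by
  obtain ⟨p, hpU, hp1, hp01⟩ := exists_continuous_eventuallyEq_one_of_mem_nhds
    (inter_mem hU (compl_singleton_mem_nhds (coe_ne_infty x)))
  have hpinf : p ∞ = 0 := image_eq_zero_of_notMem_tsupport fun h => (hpU h).2 rfl
  let g : C₀(X, 𝕜) := ofOnePoint ⟨fun z => (p z : 𝕜), by fun_prop⟩ (by simp [hpinf])
  have hg : toOnePoint g = ⟨fun z => (p z : 𝕜), by fun_prop⟩ := by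
    ext z
    induction z using OnePoint.rec with
    | infty => simp [hpinf]
    | coe x => rfl
  refine ⟨g, ?_, ?_, (norm_le zero_le_one).2 fun y => ?_⟩
  · rw [hg]
    exact (tsupport_comp_subset (by simp) p).trans (hpU.trans inter_subset_left)
  · filter_upwards [continuous_coe.continuousAt.eventually hp1] with y hy
    simp [g, hy]
  · simpa [g, abs_of_nonneg (hp01 _).1] using (hp01 _).2

end

theorem evalComp_ne_zero [LocallyCompactSpace Y] [T2Space Y] {T : C₀(X, 𝕜) →ₗ[𝕜] C₀(Y, 𝕜)}
    (hT : Surjective T) (y : Y) : evalComp T y ≠ 0 := by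
  obtain ⟨g, -, hg, -⟩ := exists_eventuallyEq_one (𝕜 := 𝕜) y univ_mem
  obtain ⟨f, rfl⟩ := hT g
  intro h
  simpa [hg.eq_of_nhds] using LinearMap.congr_fun h f

section

variable [T2Space X] [LocallyCompactSpace X]

theorem exists_sum_cutoffMul_eq (V : OnePoint X → Set (OnePoint X)) (hV : ∀ z, V z ∈ 𝓝 z)
    (f : C₀(X, 𝕜)) : ∃ (s : Finset (OnePoint X)) (p : OnePoint X → C(OnePoint X, ℝ)),
      (∀ z, tsupport (p z) ⊆ V z) ∧ ∑ z ∈ s, cutoffMul (p z) f = f := by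
  obtain ⟨ρ, hρ⟩ := PartitionOfUnity.exists_isSubordinate isClosed_univ (interior ∘ V)
    (fun _ => isOpen_interior) fun z _ => mem_iUnion.2 ⟨z, mem_interior_iff_mem_nhds.2 (hV z)⟩
  have hfin : {z | (support (ρ z)).Nonempty}.Finite := ρ.locallyFinite.finite_nonempty_of_compact
  refine ⟨hfin.toFinset, fun z => ρ z, fun z => (hρ z).trans interior_subset, ?_⟩
  ext x
  have hsum : ∑ z ∈ hfin.toFinset, ρ z x = 1 := by
    rw [← finsum_eq_sum_of_support_subset _ fun z hz => hfin.mem_toFinset.2 ⟨_, hz⟩]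
    exact ρ.sum_eq_one (mem_univ _)
  rw [← evalCLM_apply 𝕜, map_sum]
  simp only [evalCLM_apply, cutoffMul_apply, ← Finset.sum_mul, ← RCLike.ofReal_sum, hsum,
    RCLike.ofReal_one, one_mul]

section SupportPoint

variable (φ : C₀(X, 𝕜) →ₗ[𝕜] 𝕜)

theorem map_eq_zero_of_forall_isSupportPoint {f : C₀(X, 𝕜)}
    (hf : ∀ z, IsSupportPoint φ z → toOnePoint f =ᶠ[𝓝 z] 0) : φ f = 0 := by
  have hloc : ∀ z, ∃ V ∈ 𝓝 z, ∀ p : C(OnePoint X, ℝ), tsupport p ⊆ V →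
      φ (cutoffMul p f) = 0 := by
    intro z
    by_cases hz : IsSupportPoint φ z
    · refine ⟨_, hf z hz, fun p hp => ?_⟩
      have : cutoffMul p f = 0 := by
        ext x
        by_cases hx : p x = 0
        · simp [hx]
        · simp [show f x = 0 from hp (subset_tsupport _ hx)]
      rw [this, map_zero]
    · simp only [IsSupportPoint, not_forall, not_exists, not_and, not_not, exists_prop] at hz
      obtain ⟨U, hU, hφU⟩ := hz
      exact ⟨U, hU, fun p hp => hφU _ ((support_toOnePoint_cutoffMul_subset p f).trans
        ((subset_tsupport _).trans hp))⟩
  choose V hV hφV using hloc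
  obtain ⟨s, p, hp, hsum⟩ := exists_sum_cutoffMul_eq V hV f
  rw [← hsum, map_sum]
  exact Finset.sum_eq_zero fun z _ => hφV z (p z) (hp z)

theorem exists_isSupportPoint (hφ : φ ≠ 0) : ∃ z, IsSupportPoint φ z := by
  by_contra! h
  exact hφ (LinearMap.ext fun f => map_eq_zero_of_forall_isSupportPoint φ fun z hz => (h z hz).elim)

variable {φ}

theorem IsSupportPoint.eq (hφ : PreservesZeroProducts φ) {z w : OnePoint X}
    (hz : IsSupportPoint φ z) (hw : IsSupportPoint φ w) : z = w := by
  by_contra hne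
  obtain ⟨U, V, hU, hV, hzU, hwV, hUV⟩ := t2_separation hne
  obtain ⟨f, hfU, hf⟩ := hz U (hU.mem_nhds hzU)
  obtain ⟨g, hgV, hg⟩ := hw V (hV.mem_nhds hwV)
  have hfg : f * g = 0 := mul_eq_zero_of_disjoint_support <|
    disjoint_left.2 fun x hfx hgx =>
      disjoint_left.1 hUV (hfU (a := (x : OnePoint X)) hfx) (hgV (a := (x : OnePoint X)) hgx)
  exact mul_ne_zero hf hg (hφ f g hfg)

theorem map_eq_zero_of_eventuallyEq_zero (hφ : PreservesZeroProducts φ) {z : OnePoint X}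
    (hz : IsSupportPoint φ z) {f : C₀(X, 𝕜)} (hf : toOnePoint f =ᶠ[𝓝 z] 0) : φ f = 0 :=
  map_eq_zero_of_forall_isSupportPoint φ fun _ hw => hz.eq hφ hw ▸ hf

theorem IsSupportPoint.mem_tsupport (hφ : PreservesZeroProducts φ) {z : OnePoint X}
    (hz : IsSupportPoint φ z) {f : C₀(X, 𝕜)} (hf : φ f ≠ 0) : z ∈ tsupport (toOnePoint f) := by
  by_contra h
  exact hf (map_eq_zero_of_eventuallyEq_zero hφ hz (notMem_tsupport_iff_eventuallyEq.1 h))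

theorem exists_map_eq_of_mem_nhds (hφ : PreservesZeroProducts φ) {z : OnePoint X}
    (hz : IsSupportPoint φ z) (f : C₀(X, 𝕜)) {U : Set (OnePoint X)} (hU : U ∈ 𝓝 z) :
    ∃ g, support (toOnePoint g) ⊆ U ∧ (∀ x, ‖g x‖ ≤ ‖f x‖) ∧ φ g = φ f := by
  obtain ⟨p, hpU, hp1, hp01⟩ := exists_continuous_eventuallyEq_one_of_mem_nhds hU
  refine ⟨cutoffMul p f, (support_toOnePoint_cutoffMul_subset p f).trans
    ((subset_tsupport _).trans hpU), norm_cutoffMul_apply_le hp01 f, ?_⟩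
  rw [eq_comm, ← sub_eq_zero, ← map_sub]
  exact map_eq_zero_of_eventuallyEq_zero hφ hz (toOnePoint_sub_cutoffMul_eventuallyEq hp1 f)

theorem map_eq_zero_of_continuous (hφ : PreservesZeroProducts φ) {z : OnePoint X}
    (hz : IsSupportPoint φ z) (hc : Continuous φ) {f : C₀(X, 𝕜)} (hf : toOnePoint f z = 0) :
    φ f = 0 := by
  obtain ⟨C, hC, hφC⟩ := SemilinearMapClass.bound_of_continuous φ hc
  refine norm_le_zero_iff.1 (le_of_forall_pos_le_add fun ε hε => ?_)
  have hU : {w | ‖toOnePoint f w‖ < ε / C} ∈ 𝓝 z :=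
    (isOpen_lt (by fun_prop) continuous_const).mem_nhds (by simpa [hf] using div_pos hε hC)
  obtain ⟨g, hgU, hgf, hφg⟩ := exists_map_eq_of_mem_nhds hφ hz f hU
  have hg : ‖g‖ ≤ ε / C := (norm_le (by positivity)).2 fun x => by
    by_cases hx : g x = 0
    · simpa [hx] using by positivity
    · exact (hgf x).trans (hgU (a := (x : OnePoint X)) hx).le
  calc ‖φ f‖ = ‖φ g‖ := by rw [hφg]
    _ ≤ C * (ε / C) := (hφC g).trans (by gcongr)
    _ = 0 + ε := by field_simp; ring

end SupportPoint

/-- Humps of height `> n 2ⁿ` on pairwise disjoint neighbourhoods, scaled by `2⁻ⁿ` and summed,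
give `G` with `‖T G‖ ≥ ‖T G (y n)‖ > n` for every `n`. -/
theorem gliding_hump (T : C₀(X, 𝕜) →ₗ[𝕜] C₀(Y, 𝕜)) (hT : PreservesZeroProducts T) (z : OnePoint X)
    (H : ∀ M : ℝ, ∃ᶠ x in 𝓝[≠] z, ∃ y, IsSupportPoint (evalComp T y) x ∧
      ∃ f : C₀(X, 𝕜), ‖f‖ ≤ 1 ∧ M < ‖T f y‖) : False := by
  obtain ⟨x, U, hU, hxy, hdisj⟩ := exists_pairwise_disjoint_nhds_of_frequently
    (Q := fun n x => ∃ y, IsSupportPoint (evalComp T y) x ∧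
      ∃ f : C₀(X, 𝕜), ‖f‖ ≤ 1 ∧ n * 2 ^ n < ‖T f y‖) fun n => H _
  choose y hy f hf1 hfy using hxy
  have hloc : ∀ n, ∃ g : C₀(X, 𝕜), support (toOnePoint g) ⊆ U n ∧ ‖g‖ ≤ 1 ∧
      n * 2 ^ n < ‖T g (y n)‖ := fun n => by
    obtain ⟨g, hgU, hgf, hg⟩ := exists_map_eq_of_mem_nhds (hT.evalComp _) (hy n) (f n) (hU n)
    refine ⟨g, hgU, (norm_le zero_le_one).2 fun a => (hgf a).trans ?_, ?_⟩
    · exact (norm_apply_le _ a).trans (hf1 n)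
    · rw [← evalComp_apply, hg]
      exact hfy n
  choose g hgU hg1 hgy using hloc
  have hsum : Summable fun n => (2⁻¹ : 𝕜) ^ n • g n := by
    refine Summable.of_norm_bounded summable_geometric_two fun n => ?_
    rw [norm_smul, norm_pow, norm_inv, RCLike.norm_ofNat, one_div, inv_pow]
    exact mul_le_of_le_one_right (by positivity) (hg1 n)
  set G := ∑' n, (2⁻¹ : 𝕜) ^ n • g n
  have hG : ∀ n, T G (y n) = (2⁻¹ : 𝕜) ^ n * T (g n) (y n) := by
    intro n
    have hvan : toOnePoint (G - (2⁻¹ : 𝕜) ^ n • g n) =ᶠ[𝓝 (x n)] 0 := by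
      filter_upwards [hU n] with w hw
      induction w using OnePoint.rec with
      | infty => rfl
      | coe b =>
        have hGb : G b = (2⁻¹ : 𝕜) ^ n • g n b := by
          rw [← evalCLM_apply 𝕜, (evalCLM 𝕜 b).map_tsum hsum]
          refine tsum_eq_single n fun m hmn => ?_
          have : g m b = 0 := by
            by_contra h
            exact disjoint_left.1 (hdisj hmn) (hgU m (a := (b : OnePoint X)) h) hw
          simp [this]
        simp [hGb]
    simpa [sub_eq_zero] using
      map_eq_zero_of_eventuallyEq_zero (hT.evalComp (y n)) (hy n) hvan
  obtain ⟨n, hn⟩ := exists_nat_gt ‖T G‖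
  have hlarge : (n : ℝ) < ‖T G (y n)‖ := by
    rw [hG, norm_mul, norm_pow, norm_inv, RCLike.norm_ofNat]
    calc (n : ℝ) = 2⁻¹ ^ n * (n * 2 ^ n) := by
          rw [mul_left_comm, ← mul_pow, inv_mul_cancel₀ two_ne_zero, one_pow, mul_one]
      _ < 2⁻¹ ^ n * ‖T (g n) (y n)‖ := by gcongr; exact hgy n
  exact (norm_apply_le (T G) (y n)).not_gt (hn.trans hlarge)

theorem exists_continuous_apply_eq_mul {T : C₀(X, 𝕜) →ₗ[𝕜] C₀(Y, 𝕜)} {σ : Y → X} (hσ : Continuous σ)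
    (hT : ∀ f ν, f (σ ν) = 0 → T f ν = 0) :
    ∃ h : Y → 𝕜, Continuous h ∧ ∀ f ν, T f ν = h ν * f (σ ν) := by
  choose u hu using fun ν => exists_eventuallyEq_one (𝕜 := 𝕜) (σ ν) univ_mem
  have hrep : ∀ f ν, T f ν = T (u ν) ν * f (σ ν) := fun f ν => by
    have := hT (f - f (σ ν) • u ν) ν (by simp [(hu ν).2.1.eq_of_nhds])
    simpa [sub_eq_zero, mul_comm] using this
  refine ⟨fun ν => T (u ν) ν, continuous_iff_continuousAt.2 fun ν₀ => ?_, hrep⟩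
  refine (map_continuous (T (u ν₀))).continuousAt.congr ?_
  filter_upwards [hσ.continuousAt (hu ν₀).2.1] with ν hν
  rw [hrep (u ν₀) ν, hν, Pi.one_apply, mul_one]

section Equiv

variable [LocallyCompactSpace Y] [T2Space Y] (θ : C₀(X, 𝕜) ≃ₗ[𝕜] C₀(Y, 𝕜))

def supportPoint (y : Y) : OnePoint X :=
  (exists_isSupportPoint _ (evalComp_ne_zero θ.surjective y)).choose

theorem isSupportPoint_supportPoint (y : Y) :
    IsSupportPoint (evalComp θ.toLinearMap y) (supportPoint θ y) :=
  (exists_isSupportPoint _ (evalComp_ne_zero θ.surjective y)).choose_spec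

variable {θ}

theorem continuous_supportPoint (hθ : PreservesZeroProducts θ) : Continuous (supportPoint θ) := by
  refine continuous_iff_continuousAt.2 fun y => ?_
  refine (closed_nhds_basis (supportPoint θ y)).tendsto_right_iff.2 fun U ⟨hU, hUc⟩ => ?_
  obtain ⟨f, hfU, hf⟩ := isSupportPoint_supportPoint θ y U hU
  filter_upwards [(map_continuous (θ f)).continuousAt.eventually_ne hf] with v hv
  exact closure_minimal hfU hUc
    ((isSupportPoint_supportPoint θ v).mem_tsupport (hθ.evalComp (T := θ.toLinearMap) v) hv)

theorem supportPoint_eq_of_supportPoint_symm_eq (hθ : PreservesZeroProducts θ)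
    (hθ' : PreservesZeroProducts θ.symm) {x : X} {y : Y} (h : supportPoint θ.symm x = y) :
    supportPoint θ y = x := by
  -- `k` vanishes near the support points of all `y'` close to `y`, so `θ k` vanishes near `y`;
  -- but `θ⁻¹ (θ k) = k` does not vanish at `x`.
  by_contra hne
  obtain ⟨k, hk, hk1, -⟩ :=
    exists_eventuallyEq_one (𝕜 := 𝕜) x (compl_singleton_mem_nhds (Ne.symm hne))
  have hθk : ∀ᶠ v in 𝓝 y, θ k v = 0 := by
    have hO : (tsupport (toOnePoint k))ᶜ ∈ 𝓝 (supportPoint θ y) :=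
      (isClosed_tsupport _).compl_mem_nhds fun h => hk h rfl
    filter_upwards [(continuous_supportPoint hθ).continuousAt hO] with v hv
    by_contra h
    exact hv ((isSupportPoint_supportPoint θ v).mem_tsupport (hθ.evalComp (T := θ.toLinearMap) v) h)
  have hθk' : toOnePoint (θ k) =ᶠ[𝓝 (y : OnePoint Y)] 0 := by
    rw [nhds_coe_eq, EventuallyEq, eventually_map]
    exact hθk
  have := map_eq_zero_of_eventuallyEq_zero (hθ'.evalComp (T := θ.symm.toLinearMap) x)
    (h ▸ isSupportPoint_supportPoint θ.symm x) hθk'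
  simp [hk1.eq_of_nhds] at this

theorem supportPoint_symm_eq_of_supportPoint_eq (hθ : PreservesZeroProducts θ)
    (hθ' : PreservesZeroProducts θ.symm) {x : X} {y : Y} (h : supportPoint θ y = x) :
    supportPoint θ.symm x = y :=
  supportPoint_eq_of_supportPoint_symm_eq (θ := θ.symm) hθ' (by rwa [θ.symm_symm])
    (by rwa [θ.symm_symm])

theorem dense_supportPoint_ne_infty (hθ : PreservesZeroProducts θ)
    (hθ' : PreservesZeroProducts θ.symm) : Dense {y | supportPoint θ y ≠ ∞} := by
  refine dense_iff_inter_open.2 fun V hV ⟨y, hy⟩ => ?_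
  obtain ⟨g, hgV, hg, -⟩ := exists_eventuallyEq_one (𝕜 := 𝕜) y
    ((isOpen_image_coe.2 hV).mem_nhds (mem_image_of_mem _ hy))
  obtain ⟨x, hx⟩ : ∃ x, θ.symm g x ≠ 0 := by
    by_contra! h
    have : g = 0 := by
      simpa using congr(θ $(ZeroAtInftyContinuousMap.ext (g := 0) h))
    simpa [this] using hg.eq_of_nhds
  obtain ⟨y', hy'V, hy'⟩ := hgV ((isSupportPoint_supportPoint θ.symm x).mem_tsupport
    (hθ'.evalComp (T := θ.symm.toLinearMap) x) hx)
  exact ⟨y', hy'V, by simp [supportPoint_eq_of_supportPoint_symm_eq hθ hθ' hy'.symm]⟩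

theorem apply_eq_mul_of_continuous (hθ : PreservesZeroProducts θ) {x : X} {y : Y}
    (hx : supportPoint θ y = x) (hc : Continuous (evalComp θ.toLinearMap y)) (f u : C₀(X, 𝕜))
    (hu : u x = 1) : θ f y = θ u y * f x := by
  have := map_eq_zero_of_continuous (hθ.evalComp (T := θ.toLinearMap) y)
    (hx ▸ isSupportPoint_supportPoint θ y) hc (f := f - f x • u) (by simp [hu])
  simpa [sub_eq_zero, mul_comm] using this

theorem finite_setOf_not_continuous (hθ : PreservesZeroProducts θ)
    (hθ' : PreservesZeroProducts θ.symm) :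
    {y | supportPoint θ y ≠ ∞ ∧ ¬Continuous (evalComp θ.toLinearMap y)}.Finite := by
  set D := {y | supportPoint θ y ≠ ∞ ∧ ¬Continuous (evalComp θ.toLinearMap y)}
  refine Set.not_infinite.1 fun hD => ?_
  have hinj : InjOn (supportPoint θ) D := by
    intro y₁ h₁ y₂ _ h
    obtain ⟨x, hx⟩ := ne_infty_iff_exists.1 h₁.1
    exact coe_injective <| (supportPoint_symm_eq_of_supportPoint_eq hθ hθ' hx.symm).symm.trans
      (supportPoint_symm_eq_of_supportPoint_eq hθ hθ' (h ▸ hx.symm))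
  obtain ⟨z, hz⟩ := (hD.image hinj).exists_accPt_principal
  refine gliding_hump θ.toLinearMap hθ z fun M => (accPt_iff_frequently_nhdsNE.1 hz).mono ?_
  rintro _ ⟨y, hy, rfl⟩
  exact ⟨y, isSupportPoint_supportPoint θ y,
    exists_norm_le_one_lt_norm_of_not_continuous _ hy.2 M⟩

theorem supportPoint_ne_infty (hθ : PreservesZeroProducts θ)
    (hθ' : PreservesZeroProducts θ.symm) (y₀ : Y) : supportPoint θ y₀ ≠ ∞ := by
  -- At continuity points `y` near `y₀` with `σ y = x` we get `1 = θ u y * θ⁻¹ g x`, while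
  -- `θ⁻¹ g x → 0` as `x → ∞`: the functionals blow up at points accumulating at `∞`.
  intro hy₀
  set D := {y | supportPoint θ y ≠ ∞ ∧ ¬Continuous (evalComp θ.toLinearMap y)}
  set l := 𝓝[{y | supportPoint θ y ≠ ∞} ∩ Dᶜ] y₀
  have : l.NeBot := mem_closure_iff_nhdsWithin_neBot.1 <| by
    simpa only [inter_comm] using
      (finite_setOf_not_continuous hθ hθ').isClosed.isOpen_compl.inter_closure
        ⟨fun h => h.1 hy₀, (dense_supportPoint_ne_infty hθ hθ').closure_eq ▸ mem_univ y₀⟩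
  have hs : Tendsto (supportPoint θ) l (𝓝[≠] ∞) :=
    tendsto_nhdsWithin_iff.2 ⟨hy₀ ▸ ((continuous_supportPoint hθ).tendsto y₀).mono_left
      nhdsWithin_le_nhds, eventually_mem_nhdsWithin.mono fun y hy => hy.1⟩
  obtain ⟨g, -, hg, -⟩ := exists_eventuallyEq_one (𝕜 := 𝕜) y₀ univ_mem
  refine gliding_hump θ.toLinearMap hθ ∞ fun M => hs.frequently (Eventually.frequently ?_)
  have hsmall : ∀ᶠ y in l, ‖toOnePoint (θ.symm g) (supportPoint θ y)‖ < (max M 1)⁻¹ := by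
    have : Tendsto (fun y => ‖toOnePoint (θ.symm g) (supportPoint θ y)‖) l (𝓝 0) := by
      simpa [hy₀] using (((map_continuous (toOnePoint (θ.symm g))).comp
        (continuous_supportPoint hθ)).tendsto y₀).norm.mono_left nhdsWithin_le_nhds
    exact this.eventually_lt_const (by positivity)
  filter_upwards [eventually_mem_nhdsWithin, hsmall, nhdsWithin_le_nhds hg] with y ⟨hy, hyD⟩ hyg hgy
  obtain ⟨x, hx⟩ := ne_infty_iff_exists.1 hy
  obtain ⟨u, -, hu, hu1⟩ := exists_eventuallyEq_one (𝕜 := 𝕜) x univ_mem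
  refine ⟨y, isSupportPoint_supportPoint θ y, u, hu1, ?_⟩
  have hc : Continuous (evalComp θ.toLinearMap y) := by_contra fun h => hyD ⟨hy, h⟩
  have hrep := apply_eq_mul_of_continuous hθ hx.symm hc (θ.symm g) u hu.eq_of_nhds
  rw [θ.apply_symm_apply, hgy, Pi.one_apply] at hrep
  rw [← hx, toOnePoint_coe] at hyg
  have hpos : 0 < ‖θ.symm g x‖ := norm_pos_iff.2 (right_ne_zero_of_mul (hrep ▸ one_ne_zero))
  have h1 : ‖θ u y‖ * ‖θ.symm g x‖ = 1 := by rw [← norm_mul, ← hrep, norm_one]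
  change M < ‖θ u y‖
  rw [eq_inv_of_mul_eq_one_left h1]
  exact (le_max_left M 1).trans_lt ((lt_inv_comm₀ hpos (by positivity)).1 hyg)

theorem exists_homeomorph_supportPoint_eq (hθ : PreservesZeroProducts θ)
    (hθ' : PreservesZeroProducts θ.symm) : ∃ σ : Y ≃ₜ X, ∀ y, supportPoint θ y = σ y := by
  have hθ'' : PreservesZeroProducts θ.symm.symm := by rwa [θ.symm_symm]
  choose σ hσ using fun y => ne_infty_iff_exists.1 (supportPoint_ne_infty hθ hθ' y)
  choose τ hτ using fun x => ne_infty_iff_exists.1 (supportPoint_ne_infty hθ' hθ'' x)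
  refine ⟨⟨⟨σ, τ, fun y => ?_, fun x => ?_⟩, ?_, ?_⟩, fun y => (hσ y).symm⟩
  · exact coe_injective ((hτ _).trans (supportPoint_symm_eq_of_supportPoint_eq hθ hθ' (hσ y).symm))
  · exact coe_injective ((hσ _).trans (supportPoint_eq_of_supportPoint_symm_eq hθ hθ' (hτ x).symm))
  · rw [isOpenEmbedding_coe.isInducing.continuous_iff]
    simpa only [Function.comp_def, hσ] using continuous_supportPoint hθ
  · rw [isOpenEmbedding_coe.isInducing.continuous_iff]
    simpa only [Function.comp_def, hτ] using continuous_supportPoint hθ'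

theorem apply_eq_zero_of_apply_eq_zero (hθ : PreservesZeroProducts θ)
    (hθ' : PreservesZeroProducts θ.symm) {σ : Y ≃ₜ X} (hσ : ∀ y, supportPoint θ y = σ y)
    {f : C₀(X, 𝕜)} {ν : Y} (hf : f (σ ν) = 0) : θ f ν = 0 := by
  have hν := hσ ν ▸ isSupportPoint_supportPoint θ ν
  have hθν := hθ.evalComp (T := θ.toLinearMap) ν
  by_cases hc : Continuous (evalComp θ.toLinearMap ν)
  · exact map_eq_zero_of_continuous hθν hν hc hf
  by_cases hiso : IsOpen {ν}
  · refine map_eq_zero_of_eventuallyEq_zero hθν hν ?_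
    have : IsOpen {(σ ν : OnePoint X)} := by
      rw [← image_singleton, ← image_singleton, isOpen_image_coe]
      exact σ.isOpenMap _ hiso
    filter_upwards [this.mem_nhds rfl] with w hw
    rw [mem_singleton_iff.1 hw]
    exact hf
  set D := {y | supportPoint θ y ≠ ∞ ∧ ¬Continuous (evalComp θ.toLinearMap y)}
  set l := 𝓝[(D ∪ {ν})ᶜ] ν
  have : l.NeBot := mem_closure_iff_nhdsWithin_neBot.1 <| by
    rw [closure_compl, mem_compl_iff, mem_interior_iff_mem_nhds]
    exact fun h => hiso (isOpen_singleton_of_finite_mem_nhds ν h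
      ((finite_setOf_not_continuous hθ hθ').union (finite_singleton ν)))
  obtain ⟨f₁, -, hf₁, -⟩ := exists_eventuallyEq_one (𝕜 := 𝕜) (σ ν) univ_mem
  have hrep : θ f =ᶠ[l] fun y => θ f₁ y * f (σ y) := by
    filter_upwards [self_mem_nhdsWithin, nhdsWithin_le_nhds (σ.continuous.continuousAt hf₁)]
      with y hy hy1
    have hc : Continuous (evalComp θ.toLinearMap y) :=
      by_contra fun h => hy (Or.inl ⟨by simp [hσ], h⟩)
    exact apply_eq_mul_of_continuous hθ (hσ y) hc f f₁ hy1
  have hlim : Tendsto (fun y => θ f₁ y * f (σ y)) l (𝓝 (θ f₁ ν * f (σ ν))) :=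
    (((map_continuous _).mul ((map_continuous f).comp σ.continuous)).tendsto ν).mono_left
      nhdsWithin_le_nhds
  rw [hf, mul_zero] at hlim
  exact tendsto_nhds_unique (((map_continuous _).tendsto ν).mono_left nhdsWithin_le_nhds)
    (hlim.congr' hrep.symm)

end Equiv

end

end ZeroAtInftyContinuousMap

end

open ZeroAtInftyContinuousMap

theorem stmt_10
    {Ω Δ : Type*} [TopologicalSpace Ω] [LocallyCompactSpace Ω] [T2Space Ω]
    [TopologicalSpace Δ] [LocallyCompactSpace Δ] [T2Space Δ]
    (θ : C₀(Ω, ℂ) ≃ₗ[ℂ] C₀(Δ, ℂ))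
    (hfwd : ∀ f g : C₀(Ω, ℂ), f * g = 0 → θ f * θ g = 0)
    (hinv : ∀ f g : C₀(Δ, ℂ), f * g = 0 → θ.symm f * θ.symm g = 0) :
    ∃ (σ : Δ ≃ₜ Ω) (h : Δ → ℂ), Continuous h ∧ (∀ ν : Δ, h ν ≠ 0) ∧
      ∀ (f : C₀(Ω, ℂ)) (ν : Δ), θ f ν = h ν * f (σ ν) := by
  obtain ⟨σ, hσ⟩ := exists_homeomorph_supportPoint_eq hfwd hinv
  obtain ⟨h, hc, hrep⟩ := exists_continuous_apply_eq_mul (T := θ.toLinearMap) σ.continuous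
    fun f ν => apply_eq_zero_of_apply_eq_zero hfwd hinv hσ
  refine ⟨σ, h, hc, fun ν hν => ?_, hrep⟩
  obtain ⟨g, -, hg, -⟩ := exists_eventuallyEq_one (𝕜 := ℂ) ν univ_mem
  have := hrep (θ.symm g) ν
  rw [LinearEquiv.coe_coe, θ.apply_symm_apply, hν, zero_mul, hg.eq_of_nhds] at this
  exact one_ne_zero this
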